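/- arXiv:1906.03618 — 6 statements merged into one kernel-verified Lean document; each statement's English description precedes it below -/
import Mathlib

section
/- Let n ≥ 2 be an integer and λ₁, λ₂ > 0. Set p₊ = P₍>₎(λ₂,λ₁), p₋ = P₍<₎(λ₂,λ₁), and p₀ = P₍=₎(λ₂,λ₁) (so p₊ + p₋ + p₀ = 1). In the Poisson-picking pool with n agents and two processes of rates λ₁, λ₂, if the first n−1 agents all choose process 1, the expected payoff of agent n is 0 when choosing process 1 and E₂ = n·p₊ + p₀ − 1 when choosing process 2. Then: (i) if (n−1)·p₊ > p₋ then E₂ > 0, so it is uniquely optimal for agent n to choose process 2; (ii) if (n−1)·p₊ < p₋ then E₂ < 0, so it is uniquely optimal for agent n to choose process 1; (iii) if (n−1)·p₊ = p₋ then E₂ = 0, so every mixed strategy gives expected payoff 0. -/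
/-- The Poisson probability mass function with rate `l`. -/
noncomputable def poissonPMF (l : ℝ) (i : ℕ) : ℝ :=
  Real.exp (-l) * l ^ i / (Nat.factorial i)

/-- Probability that the first of two independent Poisson counts (rates `l`, `m`)
strictly exceeds the second. -/
noncomputable def Pgt (l m : ℝ) : ℝ :=
  ∑' p : ℕ × ℕ, if p.2 < p.1 then poissonPMF l p.1 * poissonPMF m p.2 else 0

/-- Probability that the first of two independent Poisson counts (rates `l`, `m`)
is strictly less than the second. -/
noncomputable def Plt (l m : ℝ) : ℝ :=
  ∑' p : ℕ × ℕ, if p.1 < p.2 then poissonPMF l p.1 * poissonPMF m p.2 else 0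

/-- Probability that two independent Poisson counts (rates `l`, `m`) are equal. -/
noncomputable def Peq (l m : ℝ) : ℝ :=
  ∑' i : ℕ, poissonPMF l i * poissonPMF m i

lemma poissonPMF_nonneg (l : ℝ) (hl : 0 ≤ l) (i : ℕ) : 0 ≤ poissonPMF l i := by
  unfold poissonPMF
  positivity

lemma summable_poissonPMF (l : ℝ) : Summable (poissonPMF l) := by
  have : poissonPMF l = fun i => Real.exp (-l) * (l ^ i / (Nat.factorial i)) := by
    funext i; unfold poissonPMF; ring
  rw [this]
  exact (Real.summable_pow_div_factorial l).mul_left _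

lemma tsum_poissonPMF (l : ℝ) : ∑' i, poissonPMF l i = 1 := by
  have h : ∑' i, poissonPMF l i = Real.exp (-l) * ∑' i, (l ^ i / (Nat.factorial i) : ℝ) := by
    rw [← tsum_mul_left]
    congr 1; funext i; unfold poissonPMF; ring
  have he : ∑' i, (l ^ i / (Nat.factorial i) : ℝ) = Real.exp l := by
    rw [Real.exp_eq_exp_ℝ, NormedSpace.exp_eq_tsum_div]
  rw [h, he, ← Real.exp_add]
  simp

lemma poisson_total (l1 l2 : ℝ) (hl1 : 0 < l1) (hl2 : 0 < l2) :
    Pgt l2 l1 + Plt l2 l1 + Peq l2 l1 = 1 := by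
  set f : ℕ × ℕ → ℝ := fun p => poissonPMF l2 p.1 * poissonPMF l1 p.2 with hf
  have hnn2 := poissonPMF_nonneg l2 hl2.le
  have hnn1 := poissonPMF_nonneg l1 hl1.le
  have hfnn : ∀ p, 0 ≤ f p := fun p => mul_nonneg (hnn2 _) (hnn1 _)
  have hnorm2 : Summable fun i => ‖poissonPMF l2 i‖ := by
    simpa [Real.norm_eq_abs, abs_of_nonneg (hnn2 _)] using summable_poissonPMF l2
  have hnorm1 : Summable fun i => ‖poissonPMF l1 i‖ := by
    simpa [Real.norm_eq_abs, abs_of_nonneg (hnn1 _)] using summable_poissonPMF l1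
  have hsf : Summable f := summable_mul_of_summable_norm hnorm2 hnorm1
  have htot : ∑' p, f p = 1 := by
    rw [← tsum_mul_tsum_of_summable_norm hnorm2 hnorm1, tsum_poissonPMF, tsum_poissonPMF,
      one_mul]
  set g1 : ℕ × ℕ → ℝ := fun p => if p.2 < p.1 then f p else 0 with hg1
  set g2 : ℕ × ℕ → ℝ := fun p => if p.1 < p.2 then f p else 0 with hg2
  set g3 : ℕ × ℕ → ℝ := fun p => if p.1 = p.2 then f p else 0 with hg3
  have hs1 : Summable g1 := hsf.of_nonneg_of_le
    (fun p => by by_cases h : p.2 < p.1 <;> simp [hg1, h, hfnn p])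
    (fun p => by by_cases h : p.2 < p.1 <;> simp [hg1, h, hfnn p])
  have hs2 : Summable g2 := hsf.of_nonneg_of_le
    (fun p => by by_cases h : p.1 < p.2 <;> simp [hg2, h, hfnn p])
    (fun p => by by_cases h : p.1 < p.2 <;> simp [hg2, h, hfnn p])
  have hs3 : Summable g3 := hsf.of_nonneg_of_le
    (fun p => by by_cases h : p.1 = p.2 <;> simp [hg3, h, hfnn p])
    (fun p => by by_cases h : p.1 = p.2 <;> simp [hg3, h, hfnn p])
  have hdecomp : ∀ p, f p = g1 p + g2 p + g3 p := by
    intro p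
    rcases lt_trichotomy p.1 p.2 with h | h | h
    · simp [hg1, hg2, hg3, h, h.ne, not_lt_of_gt h]
    · simp [hg1, hg2, hg3, h, lt_irrefl]
    · simp [hg1, hg2, hg3, h, h.ne', not_lt_of_gt h]
  have hsum : ∑' p, f p = ∑' p, g1 p + ∑' p, g2 p + ∑' p, g3 p := by
    rw [← Summable.tsum_add hs1 hs2, ← Summable.tsum_add (hs1.add hs2) hs3]
    exact tsum_congr hdecomp
  have hg3eq : ∑' p, g3 p = Peq l2 l1 := by
    rw [Summable.tsum_prod' hs3 fun i => (hs3.prod_factor i)]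
    unfold Peq
    refine tsum_congr fun i => ?_
    rw [tsum_eq_single i (fun j hj => by simp [hg3, (Ne.symm hj)])]
    simp [hg3, hf]
  have : Pgt l2 l1 = ∑' p, g1 p := rfl
  have h2 : Plt l2 l1 = ∑' p, g2 p := rfl
  rw [this, h2, ← hg3eq, ← hsum, htot]

/-- In the Poisson-picking pool with `n` agents and two processes of rates `l1`, `l2`,
if the first `n - 1` agents all choose process 1, then with `E2 = n·p₊ + p₀ − 1` the
expected payoff of agent `n` when choosing process 2 (the payoff when choosing
process 1 being 0): `p₊ + p₋ + p₀ = 1`, and (i) if `(n−1)·p₊ > p₋` then `E2 > 0`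
(choosing process 2 is uniquely optimal); (ii) if `(n−1)·p₊ < p₋` then `E2 < 0`
(choosing process 1 is uniquely optimal); (iii) if `(n−1)·p₊ = p₋` then `E2 = 0` and
every mixed strategy gives expected payoff 0. -/
theorem poisson_pool_response_to_greedy
    (n : ℕ) (hn : 2 ≤ n) (l1 l2 : ℝ) (hl1 : 0 < l1) (hl2 : 0 < l2)
    (pplus pminus pzero E2 : ℝ)
    (hplus : pplus = Pgt l2 l1) (hminus : pminus = Plt l2 l1) (hzero : pzero = Peq l2 l1)
    (hE2 : E2 = n * pplus + pzero - 1) :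
    pplus + pminus + pzero = 1 ∧
    (((n : ℝ) - 1) * pplus > pminus → 0 < E2) ∧
    (((n : ℝ) - 1) * pplus < pminus → E2 < 0) ∧
    (((n : ℝ) - 1) * pplus = pminus →
      E2 = 0 ∧ ∀ t : ℝ, 0 ≤ t → t ≤ 1 → t * 0 + (1 - t) * E2 = 0) := by
  have htot : pplus + pminus + pzero = 1 := by
    rw [hplus, hminus, hzero]; exact poisson_total l1 l2 hl1 hl2
  have hE2' : E2 = ((n : ℝ) - 1) * pplus - pminus := by
    rw [hE2]; linarith
  refine ⟨htot, fun h => by linarith, fun h => by linarith, fun h => ?_⟩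
  have hE0 : E2 = 0 := by linarith
  exact ⟨hE0, fun t _ _ => by rw [hE0]; ring⟩
end

section
/- Let n ≥ 3 be an integer and let a, b be reals with a > 0, b ≥ 0 and a ≥ (n−1)·b. Then F_n(a,b,s) > 0 for every s ∈ [0,1). Symmetrically, if b > 0, a ≥ 0 and b ≥ (n−1)·a, then F_n(a,b,s) < 0 for every s ∈ (0,1]. (Consequently, in these regimes only the pure strategy concentrated on the dominant process can be a symmetric equilibrium of the n-agent two-process winners-take-all pool.) -/
/-- The polynomial `F_n(a,b,s)`: the derivative, with respect to an agent's own
probability of choosing process 1, of its expected payoff in the symmetric `n`-agent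
two-process winners-take-all pool in which every other agent chooses process 1 with
probability `s`; here `a` (resp. `b`) is the probability that process 1 has strictly
more (resp. strictly fewer) events than process 2. -/
noncomputable def F (n : ℕ) (a b s : ℝ) : ℝ :=
  (∑ k ∈ Finset.Icc 1 (n - 2), ((n - 1).choose k : ℝ) * s ^ k * (1 - s) ^ (n - 1 - k) *
      (a * n / (k + 1) - b * n / ((n : ℝ) - k))) +
    (1 - s) ^ (n - 1) * (a * ((n : ℝ) - 1) - b) + s ^ (n - 1) * (a - b * ((n : ℝ) - 1))

/-- If `a > 0`, `b ≥ 0` and `a ≥ (n−1)·b` then `F_n(a,b,s) > 0` for every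
`s ∈ [0,1)`; symmetrically, if `b > 0`, `a ≥ 0` and `b ≥ (n−1)·a` then
`F_n(a,b,s) < 0` for every `s ∈ (0,1]`. Consequently, in these regimes only the pure
strategy concentrated on the dominant process can be a symmetric equilibrium of the
`n`-agent two-process winners-take-all pool. -/
theorem F_sign_in_dominant_regimes (n : ℕ) (hn : 3 ≤ n) (a b : ℝ) :
    (0 < a → 0 ≤ b → ((n : ℝ) - 1) * b ≤ a →
      ∀ s : ℝ, 0 ≤ s → s < 1 → 0 < F n a b s) ∧
    (0 < b → 0 ≤ a → ((n : ℝ) - 1) * a ≤ b →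
      ∀ s : ℝ, 0 < s → s ≤ 1 → F n a b s < 0) := by
  have hnR : (3 : ℝ) ≤ (n : ℝ) := by exact_mod_cast hn
  constructor
  · intro ha hb hab s hs0 hs1
    have hSum : 0 ≤ ∑ k ∈ Finset.Icc 1 (n - 2),
        ((n - 1).choose k : ℝ) * s ^ k * (1 - s) ^ (n - 1 - k) *
          (a * n / (k + 1) - b * n / ((n : ℝ) - k)) := by
      apply Finset.sum_nonneg
      intro k hk
      rw [Finset.mem_Icc] at hk
      have hk1 : (1 : ℝ) ≤ (k : ℝ) := by exact_mod_cast hk.1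
      have hk2 : (k : ℝ) ≤ (n : ℝ) - 2 := by
        have : (k : ℝ) ≤ ((n - 2 : ℕ) : ℝ) := by exact_mod_cast hk.2
        have h2 : ((n - 2 : ℕ) : ℝ) = (n : ℝ) - 2 := by
          have : 2 ≤ n := by omega
          push_cast [Nat.cast_sub this]; ring
        linarith [this, h2.le, h2.ge]
      have hd1 : (0 : ℝ) < (k : ℝ) + 1 := by linarith
      have hd2 : (0 : ℝ) < (n : ℝ) - (k : ℝ) := by linarith
      have hcoef : 0 ≤ a * n / (k + 1) - b * n / ((n : ℝ) - k) := by
        rw [sub_nonneg, div_le_div_iff₀ hd2 hd1]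
        nlinarith [mul_nonneg hb (by linarith : (0:ℝ) ≤ (n:ℝ)),
          mul_nonneg (mul_nonneg hb (by linarith : (0:ℝ) ≤ (n:ℝ)))
            (by linarith : (0:ℝ) ≤ (n:ℝ) - 2 - (k:ℝ)),
          mul_nonneg (sub_nonneg.mpr hab) (by linarith : (0:ℝ) ≤ (n:ℝ))]
      have hfac : 0 ≤ ((n - 1).choose k : ℝ) * s ^ k * (1 - s) ^ (n - 1 - k) := by
        have h1 : (0 : ℝ) ≤ 1 - s := by linarith
        positivity
      exact mul_nonneg hfac hcoef
    have hT1 : 0 < (1 - s) ^ (n - 1) * (a * ((n : ℝ) - 1) - b) := by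
      have h1 : (0 : ℝ) < 1 - s := by linarith
      have h2 : 0 < a * ((n : ℝ) - 1) - b := by
        nlinarith [mul_pos (by linarith : (0:ℝ) < (n:ℝ) - 2) ha,
          mul_nonneg (by linarith : (0:ℝ) ≤ (n:ℝ) - 2) hb]
      exact mul_pos (pow_pos h1 _) h2
    have hT2 : 0 ≤ s ^ (n - 1) * (a - b * ((n : ℝ) - 1)) := by
      have h2 : 0 ≤ a - b * ((n : ℝ) - 1) := by nlinarith
      exact mul_nonneg (pow_nonneg hs0 _) h2
    unfold F
    linarith
  · intro hb ha hab s hs0 hs1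
    have hSum : (∑ k ∈ Finset.Icc 1 (n - 2),
        ((n - 1).choose k : ℝ) * s ^ k * (1 - s) ^ (n - 1 - k) *
          (a * n / (k + 1) - b * n / ((n : ℝ) - k))) ≤ 0 := by
      apply Finset.sum_nonpos
      intro k hk
      rw [Finset.mem_Icc] at hk
      have hk1 : (1 : ℝ) ≤ (k : ℝ) := by exact_mod_cast hk.1
      have hk2 : (k : ℝ) ≤ (n : ℝ) - 2 := by
        have : (k : ℝ) ≤ ((n - 2 : ℕ) : ℝ) := by exact_mod_cast hk.2
        have h2 : ((n - 2 : ℕ) : ℝ) = (n : ℝ) - 2 := by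
          have : 2 ≤ n := by omega
          push_cast [Nat.cast_sub this]; ring
        linarith [this, h2.le, h2.ge]
      have hd1 : (0 : ℝ) < (k : ℝ) + 1 := by linarith
      have hd2 : (0 : ℝ) < (n : ℝ) - (k : ℝ) := by linarith
      have hcoef : a * n / (k + 1) - b * n / ((n : ℝ) - k) ≤ 0 := by
        rw [sub_nonpos, div_le_div_iff₀ hd1 hd2]
        nlinarith [mul_nonneg ha (by linarith : (0:ℝ) ≤ (n:ℝ)),
          mul_nonneg (mul_nonneg ha (by linarith : (0:ℝ) ≤ (n:ℝ)))
            (by linarith : (0:ℝ) ≤ (k:ℝ) - 1),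
          mul_nonneg (sub_nonneg.mpr hab) (by linarith : (0:ℝ) ≤ (n:ℝ))]
      have hfac : 0 ≤ ((n - 1).choose k : ℝ) * s ^ k * (1 - s) ^ (n - 1 - k) := by
        have h1 : (0 : ℝ) ≤ 1 - s := by linarith
        positivity
      exact mul_nonpos_of_nonneg_of_nonpos hfac hcoef
    have hT1 : (1 - s) ^ (n - 1) * (a * ((n : ℝ) - 1) - b) ≤ 0 := by
      have h1 : (0 : ℝ) ≤ 1 - s := by linarith
      have h2 : a * ((n : ℝ) - 1) - b ≤ 0 := by nlinarith
      exact mul_nonpos_of_nonneg_of_nonpos (pow_nonneg h1 _) h2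
    have hT2 : s ^ (n - 1) * (a - b * ((n : ℝ) - 1)) < 0 := by
      have h2 : a - b * ((n : ℝ) - 1) < 0 := by
        nlinarith [mul_pos (by linarith : (0:ℝ) < (n:ℝ) - 2) hb,
          mul_nonneg (by linarith : (0:ℝ) ≤ (n:ℝ) - 2) ha]
      exact mul_neg_of_pos_of_neg (pow_pos hs0 _) h2
    unfold F
    linarith
end

section
/- Let n ≥ 3 be an integer and let a, b > 0 be reals with b/(n−1) < a < (n−1)·b. Then F_n(a,b,0) > 0 and F_n(a,b,1) < 0, and consequently there exists s ∈ (0,1) with F_n(a,b,s) = 0. -/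
lemma F_zero (n : ℕ) (hn : 3 ≤ n) (a b : ℝ) :
    F n a b 0 = a * ((n : ℝ) - 1) - b := by
  have h1 : n - 1 ≠ 0 := by omega
  unfold F
  rw [Finset.sum_eq_zero, zero_pow h1]
  · simp
  · intro k hk
    have hk1 : 1 ≤ k := (Finset.mem_Icc.mp hk).1
    have : (0 : ℝ) ^ k = 0 := zero_pow (by omega)
    simp [this]

lemma F_one (n : ℕ) (hn : 3 ≤ n) (a b : ℝ) :
    F n a b 1 = a - b * ((n : ℝ) - 1) := by
  have h1 : n - 1 ≠ 0 := by omega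
  unfold F
  rw [Finset.sum_eq_zero]
  · norm_num [zero_pow h1]
  · intro k hk
    have hk2 : k ≤ n - 2 := (Finset.mem_Icc.mp hk).2
    have : ((1 : ℝ) - 1) ^ (n - 1 - k) = 0 := by
      rw [sub_self]; exact zero_pow (by omega)
    simp only [this, mul_zero, zero_mul]

lemma F_cont (n : ℕ) (a b : ℝ) : Continuous (F n a b) := by
  unfold F
  fun_prop

/-- If `n ≥ 3`, `a, b > 0` and `b/(n−1) < a < (n−1)·b`, then `F_n(a,b,0) > 0` and
`F_n(a,b,1) < 0`, and consequently `F_n(a,b,·)` has a root in `(0,1)`. -/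
theorem F_has_interior_root (n : ℕ) (hn : 3 ≤ n) (a b : ℝ) (ha : 0 < a) (hb : 0 < b)
    (h1 : b / ((n : ℝ) - 1) < a) (h2 : a < ((n : ℝ) - 1) * b) :
    0 < F n a b 0 ∧ F n a b 1 < 0 ∧ ∃ s : ℝ, 0 < s ∧ s < 1 ∧ F n a b s = 0 := by
  have hn1 : (0 : ℝ) < (n : ℝ) - 1 := by
    have : (3 : ℝ) ≤ (n : ℝ) := by exact_mod_cast hn
    linarith
  have hF0 : 0 < F n a b 0 := by
    rw [F_zero n hn a b]
    have := (div_lt_iff₀ hn1).mp h1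
    linarith [mul_comm b ((n : ℝ) - 1)]
  have hF1 : F n a b 1 < 0 := by
    rw [F_one n hn a b]
    linarith [mul_comm ((n : ℝ) - 1) b]
  refine ⟨hF0, hF1, ?_⟩
  have hs : (0 : ℝ) ∈ Set.Ioo (F n a b 1) (F n a b 0) := ⟨hF1, hF0⟩
  have := intermediate_value_Ioo' (le_of_lt one_pos) (F_cont n a b).continuousOn hs
  obtain ⟨s, hs01, hFs⟩ := this
  exact ⟨s, hs01.1, hs01.2, hFs⟩
end

section
/- (Symmetric equilibrium for 3 agents and 2 processes.) Let a, b > 0 be reals with b/2 < a < 2·b. Then F_3(a,b,s) = (2a − b) − (a + b)·s for all real s, the number s* = (2a − b)/(a + b) lies in the open interval (0,1), and s* is the unique real root of F_3(a,b,·). Hence in the 3-agent two-process winners-take-all pool with 1/2 < a/b < 2, the only symmetric Nash equilibrium has each agent choose process 1 with probability (2a − b)/(a + b). -/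
/-- Symmetric equilibrium for 3 agents and 2 processes: if `a, b > 0` with
`b/2 < a < 2b`, then `F_3(a,b,s) = (2a − b) − (a + b)·s` for all real `s`, the value
`s* = (2a − b)/(a + b)` lies in `(0,1)`, and `s*` is the unique real root of
`F_3(a,b,·)`. Hence in the 3-agent two-process winners-take-all pool with
`1/2 < a/b < 2`, the only symmetric Nash equilibrium has each agent choose process 1
with probability `(2a − b)/(a + b)`. -/
theorem symmetric_equilibrium_three_agents (a b : ℝ) (ha : 0 < a) (hb : 0 < b)
    (h1 : b / 2 < a) (h2 : a < 2 * b) :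
    (∀ s : ℝ, F 3 a b s = (2 * a - b) - (a + b) * s) ∧
    0 < (2 * a - b) / (a + b) ∧ (2 * a - b) / (a + b) < 1 ∧
    (∀ s : ℝ, F 3 a b s = 0 ↔ s = (2 * a - b) / (a + b)) := by
  have hab : 0 < a + b := by linarith
  have key : ∀ s : ℝ, F 3 a b s = (2 * a - b) - (a + b) * s := by
    intro s
    simp only [F]
    norm_num [show (3:ℕ) - 2 = 1 from rfl, Finset.Icc_self, Finset.sum_singleton]
    ring
  refine ⟨key, div_pos (by linarith) hab, ?_, ?_⟩
  · rw [div_lt_one hab]; linarith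
  · intro s
    rw [key, eq_div_iff hab.ne']
    constructor <;> intro h <;> nlinarith
end

section
/- (Symmetric equilibrium for 4 agents and 2 processes.) Let a, b > 0 be reals, set c = a/b, and suppose 1/3 < c < 3. Then b·((c−1)·s² − (3c+1)·s + (3c−1)) = F_4(a,b,s) for all real s, and: (i) if c = 1, then s = 1/2 is the unique root of F_4(a,b,·) in the interval (0,1); (ii) if c ≠ 1, then s* = ((3c+1) − √((3c+1)² − 4·(c−1)·(3c−1)))/(2·(c−1)) lies in (0,1) and is the unique root of F_4(a,b,·) in (0,1). -/
/-- Symmetric equilibrium for 4 agents and 2 processes: let `a, b > 0`, `c = a/b`,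
and `1/3 < c < 3`. Then `b·((c−1)·s² − (3c+1)·s + (3c−1)) = F_4(a,b,s)` for all real
`s`, and: (i) if `c = 1`, then `s = 1/2` is the unique root of `F_4(a,b,·)` in
`(0,1)`; (ii) if `c ≠ 1`, then
`s* = ((3c+1) − √((3c+1)² − 4(c−1)(3c−1)))/(2(c−1))` lies in `(0,1)` and is the
unique root of `F_4(a,b,·)` in `(0,1)`. -/
theorem symmetric_equilibrium_four_agents (a b c : ℝ) (ha : 0 < a) (hb : 0 < b)
    (hc : c = a / b) (hc1 : 1 / 3 < c) (hc3 : c < 3) :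
    (∀ s : ℝ, b * ((c - 1) * s ^ 2 - (3 * c + 1) * s + (3 * c - 1)) = F 4 a b s) ∧
    (c = 1 → ∀ s : ℝ, 0 < s → s < 1 → (F 4 a b s = 0 ↔ s = 1 / 2)) ∧
    (c ≠ 1 →
      0 < ((3 * c + 1) - Real.sqrt ((3 * c + 1) ^ 2 - 4 * (c - 1) * (3 * c - 1))) /
          (2 * (c - 1)) ∧
      ((3 * c + 1) - Real.sqrt ((3 * c + 1) ^ 2 - 4 * (c - 1) * (3 * c - 1))) /
          (2 * (c - 1)) < 1 ∧
      ∀ s : ℝ, 0 < s → s < 1 → (F 4 a b s = 0 ↔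
        s = ((3 * c + 1) - Real.sqrt ((3 * c + 1) ^ 2 - 4 * (c - 1) * (3 * c - 1))) /
            (2 * (c - 1)))) := by

  have hb' : b ≠ 0 := hb.ne'
  have hab : a = c * b := by rw [hc]; field_simp
  have hF : ∀ s : ℝ, b * ((c - 1) * s ^ 2 - (3 * c + 1) * s + (3 * c - 1)) = F 4 a b s := by
    intro s
    have h2 : Finset.Icc 1 (4 - 2) = ({1, 2} : Finset ℕ) := rfl
    simp only [F, h2, Finset.sum_insert (by norm_num : (1:ℕ) ∉ ({2} : Finset ℕ)),
      Finset.sum_singleton]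
    norm_num [hab]
    ring
  have hquad : ∀ s : ℝ, F 4 a b s = 0 ↔
      (c - 1) * s ^ 2 - (3 * c + 1) * s + (3 * c - 1) = 0 := by
    intro s
    rw [← hF s, mul_eq_zero]
    simp [hb']
  refine ⟨hF, ?_, ?_⟩
  · intro h1 s hs0 hs1
    rw [hquad s, h1]
    constructor
    · intro h; linarith [h]
    · intro h; rw [h]; ring
  · intro hc1'
    have hcne : c - 1 ≠ 0 := sub_ne_zero.mpr hc1'
    set D := (3 * c + 1) ^ 2 - 4 * (c - 1) * (3 * c - 1) with hD
    have hDpos : 0 < D := by rw [hD]; nlinarith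
    have hsq : Real.sqrt D ^ 2 = D := Real.sq_sqrt hDpos.le
    have hsD : 0 ≤ Real.sqrt D := Real.sqrt_nonneg D
    have hbounds : 0 < ((3 * c + 1) - Real.sqrt D) / (2 * (c - 1)) ∧
        ((3 * c + 1) - Real.sqrt D) / (2 * (c - 1)) < 1 := by
      rcases lt_or_gt_of_ne hc1' with h | h
      · -- c < 1
        have hnum : 3 * c + 1 < Real.sqrt D := by
          rw [show (3*c+1 : ℝ) = Real.sqrt ((3*c+1)^2) from (Real.sqrt_sq (by linarith)).symm]
          apply Real.sqrt_lt_sqrt (by positivity)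
          nlinarith
        have hlt : Real.sqrt D < c + 3 := by
          rw [show (c+3 : ℝ) = Real.sqrt ((c+3)^2) from (Real.sqrt_sq (by linarith)).symm]
          apply Real.sqrt_lt_sqrt hDpos.le
          nlinarith
        constructor
        · apply div_pos_of_neg_of_neg <;> linarith
        · rw [div_lt_iff_of_neg (by linarith)]
          linarith
      · -- c > 1
        have hnum : Real.sqrt D < 3 * c + 1 := by
          rw [show (3*c+1 : ℝ) = Real.sqrt ((3*c+1)^2) from (Real.sqrt_sq (by linarith)).symm]
          apply Real.sqrt_lt_sqrt hDpos.le
          nlinarith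
        have hgt : c + 3 < Real.sqrt D := by
          rw [show (c+3 : ℝ) = Real.sqrt ((c+3)^2) from (Real.sqrt_sq (by linarith)).symm]
          apply Real.sqrt_lt_sqrt (by positivity)
          nlinarith
        constructor
        · apply div_pos <;> linarith
        · rw [div_lt_one (by linarith)]
          linarith
    refine ⟨hbounds.1, hbounds.2, ?_⟩
    intro s hs0 hs1
    rw [hquad s]
    constructor
    · intro hg
      have hpos : 0 < 3 * c + 1 - 2 * (c - 1) * s := by
        rcases lt_or_gt_of_ne hc1' with h | h
        · nlinarith
        · nlinarith
      have key : (3 * c + 1 - 2 * (c - 1) * s) ^ 2 = D := by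
        rw [hD]; linear_combination 4 * (c - 1) * hg
      have hsqrt : Real.sqrt D = 3 * c + 1 - 2 * (c - 1) * s := by
        rw [← key]; exact Real.sqrt_sq hpos.le
      rw [eq_div_iff (by intro h; apply hcne; linarith)]
      linear_combination hsqrt
    · intro h
      rw [h]
      have h2 : (2 : ℝ) * (c - 1) ≠ 0 := by intro h'; apply hcne; linarith
      field_simp
      linear_combination hsq + hD
end

section
/- (Necessary condition for an interior symmetric equilibrium.) Let n ≥ 3 be an integer and let a, b, e ≥ 0 be reals with a + b + e = 1. Define u, v : {0,…,n−1} → ℝ by u(k) = −1 + e + a·n/(k+1) for 0 ≤ k ≤ n−2 and u(n−1) = 0, and v(k) = −1 + e + b·n/(n−k) for 1 ≤ k ≤ n−1 and v(0) = 0, and define G : [0,1] × [0,1] → ℝ by G(t,s) = Σ_{k=0}^{n−1} C(n−1,k)·s^k·(1−s)^{n−1−k}·(t·u(k) + (1−t)·v(k)) (the expected payoff to an agent who chooses process 1 with probability t while each of the other n−1 agents independently chooses process 1 with probability s). If s ∈ (0,1) and G(s,s) ≥ G(t,s) for all t ∈ [0,1], then F_n(a,b,s) = 0. -/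
/-- Necessary condition for an interior symmetric equilibrium. Here `a`, `b`, `e` are
the probabilities that process 1 has strictly more, strictly fewer, or equally many
events as process 2; `u k` (resp. `v k`) is the expected payoff of an agent choosing
process 1 (resp. process 2) when exactly `k` of the other `n − 1` agents choose
process 1; and `G t s` is the expected payoff to an agent who chooses process 1 with
probability `t` while each of the other `n − 1` agents independently chooses
process 1 with probability `s`. If `s ∈ (0,1)` and `G s s ≥ G t s` for all
`t ∈ [0,1]`, then `F_n(a,b,s) = 0`. -/
theorem interior_symmetric_equilibrium_root_of_F
    (n : ℕ) (hn : 3 ≤ n) (a b e : ℝ) (ha : 0 ≤ a) (hb : 0 ≤ b) (he : 0 ≤ e)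
    (habe : a + b + e = 1) (u v : ℕ → ℝ)
    (hu : ∀ k : ℕ, k ≤ n - 2 → u k = -1 + e + a * n / ((k : ℝ) + 1))
    (hu' : u (n - 1) = 0)
    (hv : ∀ k : ℕ, 1 ≤ k → k ≤ n - 1 → v k = -1 + e + b * n / ((n : ℝ) - k))
    (hv0 : v 0 = 0)
    (G : ℝ → ℝ → ℝ)
    (hG : ∀ t s : ℝ, G t s = ∑ k ∈ Finset.range n,
        ((n - 1).choose k : ℝ) * s ^ k * (1 - s) ^ (n - 1 - k) *
          (t * u k + (1 - t) * v k))
    (s : ℝ) (hs0 : 0 < s) (hs1 : s < 1)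
    (hbest : ∀ t : ℝ, 0 ≤ t → t ≤ 1 → G t s ≤ G s s) :
    F n a b s = 0 := by
  obtain ⟨m, rfl⟩ : ∃ m, n = m + 3 := ⟨n - 3, by omega⟩
  have he' : e = 1 - a - b := by linarith
  set c : ℕ → ℝ := fun k => ((m + 3 - 1).choose k : ℝ) * s ^ k * (1 - s) ^ (m + 3 - 1 - k)
    with hc
  set D : ℝ := ∑ k ∈ Finset.range (m + 3), c k * (u k - v k) with hD
  have hlin : ∀ t : ℝ, G t s = G 0 s + t * D := by
    intro t
    rw [hG, hG, hD, Finset.mul_sum, ← Finset.sum_add_distrib]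
    refine Finset.sum_congr rfl fun k _ => ?_
    simp only [hc]
    ring
  have hD0 : D = 0 := by
    have h1 : G 0 s + 1 * D ≤ G 0 s + s * D := by rw [← hlin, ← hlin]; exact hbest 1 (by norm_num) le_rfl
    have h0 : G 0 s + 0 * D ≤ G 0 s + s * D := by rw [← hlin, ← hlin]; exact hbest 0 le_rfl (by norm_num)
    have hle : D ≤ 0 := by nlinarith
    have hge : 0 ≤ D := by nlinarith
    linarith
  have key : F (m + 3) a b s = D := by
    rw [hD, F, Finset.sum_range_succ, Finset.sum_range_succ']
    have hIcc : (Finset.Icc 1 (m + 3 - 2)) = Finset.Ico 1 (m + 2) := by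
      rw [← Finset.Ico_add_one_right_eq_Icc]
      congr 1
    rw [hIcc, Finset.sum_Ico_eq_sum_range]
    have hmain : ∀ i ∈ Finset.range (m + 2 - 1),
        ((m + 3 - 1).choose (1 + i) : ℝ) * s ^ (1 + i) * (1 - s) ^ (m + 3 - 1 - (1 + i)) *
          (a * (m + 3 : ℕ) / ((1 + i : ℕ) + 1) - b * (m + 3 : ℕ) / (((m + 3 : ℕ) : ℝ) - (1 + i : ℕ)))
        = c (1 + i) * (u (1 + i) - v (1 + i)) := by
      intro i hi
      simp only [Finset.mem_range] at hi
      rw [hu (1 + i) (by omega), hv (1 + i) (by omega) (by omega), hc]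
      push_cast
      ring
    rw [Finset.sum_congr rfl hmain]
    have h0 : c 0 * (u 0 - v 0) = (1 - s) ^ (m + 3 - 1) * (a * ((m + 3 : ℕ) - 1) - b) := by
      rw [hv0, hu 0 (by omega), hc]
      simp only [Nat.choose_zero_right, Nat.cast_one, he']
      push_cast
      ring
    have htop : c (m + 2) * (u (m + 2) - v (m + 2)) =
        s ^ (m + 3 - 1) * (a - b * ((m + 3 : ℕ) - 1)) := by
      have : u (m + 2) = 0 := hu'
      have hden : ((m + 3 : ℕ) : ℝ) - ((m + 2 : ℕ) : ℝ) = 1 := by push_cast; ring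
      rw [this, hv (m + 2) (by omega) (by omega), hc, hden]
      simp only [show m + 3 - 1 = m + 2 from rfl, Nat.choose_self, Nat.cast_one, he', Nat.sub_self, pow_zero, mul_one]
      push_cast
      ring
    have hsum : ∑ x ∈ Finset.range (m + 2 - 1), c (1 + x) * (u (1 + x) - v (1 + x))
        = ∑ x ∈ Finset.range (m + 1), c (x + 1) * (u (x + 1) - v (x + 1)) :=
      Finset.sum_congr rfl fun x _ => by rw [add_comm 1 x]
    rw [h0, htop, hsum]
  rw [key, hD0]
end
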